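/- Let M, M̂ ∈ ℝ^{d1×d2} satisfy β ≤ M_ij ≤ α and β ≤ M̂_ij ≤ α for all (i,j), where 0 < β ≤ α, and set T = (α−β)²/(8β). Then d_H²(M, M̂) ≥ ((1 − e^{−T})/(4αT)) · ‖M − M̂‖_F² / (d1 d2). -/

import Mathlib

/-!
Entrywise, with `x = (√p - √q)² / 2`, the Hellinger term is `2 (1 - e^{-x})`. Since `√p, √q` lie in
`[√β, √α]`, we have `x ≤ T`, and on `[0, T]` the concave function `1 - e^{-x}` lies above its chord
`x (1 - e^{-T}) / T`. Finally `(p - q)² = (√p - √q)² (√p + √q)² ≤ 8 α x`; summing over the entries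
gives the bound.
-/

open Real

/-- Squared Frobenius norm. -/
def frobSq {d1 d2 : ℕ} (M : Matrix (Fin d1) (Fin d2) ℝ) : ℝ := ∑ i, ∑ j, (M i j) ^ 2

/-- The average squared Hellinger distance between the entrywise Poisson distributions of two
matrices with positive entries:
`d_H²(P,Q) = (1/(d1 d2)) ∑_{i,j} (2 − 2 exp(−(1/2)(√P_ij − √Q_ij)²))`. -/
noncomputable def hellingerSq {d1 d2 : ℕ} (P Q : Matrix (Fin d1) (Fin d2) ℝ) : ℝ :=
  1 / ((d1 : ℝ) * d2) *
    ∑ i, ∑ j, (2 - 2 * Real.exp (-(1 / 2) * (Real.sqrt (P i j) - Real.sqrt (Q i j)) ^ 2))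

open Set

/-- Also valid for `T = 0` (the degenerate case `α = β`), where the slope is the junk value `0 / 0 = 0`. -/
theorem one_sub_exp_neg_div_mul_le_one_sub_exp_neg {T x : ℝ} (hx : 0 ≤ x) (hxT : x ≤ T) :
    (1 - exp (-T)) / T * x ≤ 1 - exp (-x) := by
  rcases hx.eq_or_lt with rfl | hx
  · simp
  have hT : 0 < T := hx.trans_le hxT
  have hconv := convexOn_exp.2 (mem_univ (-T)) (mem_univ 0) (div_nonneg hx.le hT.le)
    (sub_nonneg.2 ((div_le_one hT).2 hxT)) (add_sub_cancel _ _)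
  have harg : (x / T) • (-T) + (1 - x / T) • (0 : ℝ) = -x := by
    simp only [smul_eq_mul, mul_zero, add_zero]
    field_simp
  rw [harg, smul_eq_mul, smul_eq_mul, exp_zero] at hconv
  calc (1 - exp (-T)) / T * x = 1 - (x / T * exp (-T) + (1 - x / T) * 1) := by ring
    _ ≤ 1 - exp (-x) := by linarith

theorem sq_sub_eq_sq_sqrt_sub_mul_sq_sqrt_add {p q : ℝ} (hp : 0 ≤ p) (hq : 0 ≤ q) :
    (p - q) ^ 2 = (√p - √q) ^ 2 * (√p + √q) ^ 2 := by
  rw [← mul_pow, mul_comm (√p - √q), ← sq_sub_sq, sq_sqrt hp, sq_sqrt hq]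

theorem sq_sub_le_four_mul_sq_sqrt_sub {p q α : ℝ} (hp : 0 ≤ p) (hq : 0 ≤ q) (hpα : p ≤ α)
    (hqα : q ≤ α) : (p - q) ^ 2 ≤ 4 * α * (√p - √q) ^ 2 := by
  have hsum : (√p + √q) ^ 2 ≤ 4 * α := by
    have h : √p + √q ≤ 2 * √α := by linarith [sqrt_le_sqrt hpα, sqrt_le_sqrt hqα]
    calc (√p + √q) ^ 2 ≤ (2 * √α) ^ 2 := by gcongr
      _ = 4 * α := by rw [mul_pow, sq_sqrt (hp.trans hpα)]; norm_num
  rw [sq_sub_eq_sq_sqrt_sub_mul_sq_sqrt_add hp hq, mul_comm (4 * α)]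
  gcongr

theorem four_mul_sq_sqrt_sub_le_sq_sub {α β : ℝ} (hβ : 0 ≤ β) (hβα : β ≤ α) :
    4 * β * (√α - √β) ^ 2 ≤ (α - β) ^ 2 := by
  have hsum : 4 * β ≤ (√α + √β) ^ 2 := by
    have h : 2 * √β ≤ √α + √β := by linarith [sqrt_le_sqrt hβα]
    calc 4 * β = (2 * √β) ^ 2 := by rw [mul_pow, sq_sqrt hβ]; norm_num
      _ ≤ (√α + √β) ^ 2 := by gcongr
  rw [sq_sub_eq_sq_sqrt_sub_mul_sq_sqrt_add (hβ.trans hβα) hβ, mul_comm (4 * β)]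
  gcongr

theorem abs_sqrt_sub_sqrt_le {p q α β : ℝ} (hp : p ∈ Icc β α) (hq : q ∈ Icc β α) :
    |√p - √q| ≤ √α - √β :=
  abs_sub_le_iff.2
    ⟨by linarith [sqrt_le_sqrt hp.2, sqrt_le_sqrt hq.1],
      by linarith [sqrt_le_sqrt hq.2, sqrt_le_sqrt hp.1]⟩

theorem half_sq_sqrt_sub_le {p q α β : ℝ} (hβ : 0 < β) (hp : p ∈ Icc β α) (hq : q ∈ Icc β α) :
    1 / 2 * (√p - √q) ^ 2 ≤ (α - β) ^ 2 / (8 * β) := by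
  have hsq : (√p - √q) ^ 2 ≤ (√α - √β) ^ 2 := by
    rw [← sq_abs]
    exact pow_le_pow_left₀ (abs_nonneg _) (abs_sqrt_sub_sqrt_le hp hq) 2
  rw [le_div_iff₀ (by positivity)]
  nlinarith [four_mul_sq_sqrt_sub_le_sq_sub hβ.le (hp.1.trans hp.2)]

theorem poisson_hellinger_term_lower_bound {p q α β : ℝ} (hβ : 0 < β) (hp : p ∈ Icc β α)
    (hq : q ∈ Icc β α) :
    (1 - exp (-((α - β) ^ 2 / (8 * β)))) / (4 * α * ((α - β) ^ 2 / (8 * β))) * (p - q) ^ 2 ≤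
      2 - 2 * exp (-(1 / 2) * (√p - √q) ^ 2) := by
  set T := (α - β) ^ 2 / (8 * β)
  set x := 1 / 2 * (√p - √q) ^ 2 with hx
  have hα : 0 < α := hβ.trans_le (hp.1.trans hp.2)
  have hxT : x ≤ T := half_sq_sqrt_sub_le hβ hp hq
  have hslope : 0 ≤ (1 - exp (-T)) / T :=
    div_nonneg (sub_nonneg.2 (exp_le_one_iff.2 (neg_nonpos.2 (by positivity)))) (by positivity)
  have hpq : (p - q) ^ 2 / (4 * α) ≤ 2 * x := by
    rw [div_le_iff₀ (by positivity), hx]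
    linarith [sq_sub_le_four_mul_sq_sqrt_sub (hβ.le.trans hp.1) (hβ.le.trans hq.1) hp.2 hq.2]
  calc (1 - exp (-T)) / (4 * α * T) * (p - q) ^ 2
      = 2 * ((1 - exp (-T)) / T * ((p - q) ^ 2 / (4 * α) / 2)) := by
        field_simp
    _ ≤ 2 * ((1 - exp (-T)) / T * x) := by gcongr; linarith
    _ ≤ 2 * (1 - exp (-x)) := by
        gcongr
        exact one_sub_exp_neg_div_mul_le_one_sub_exp_neg (by positivity) hxT
    _ = 2 - 2 * exp (-(1 / 2) * (√p - √q) ^ 2) := by rw [neg_mul]; ring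

theorem hellinger_lower_bound_frobenius_general (d1 d2 : ℕ) (α β : ℝ) (hβ : 0 < β)
    (M Mhat : Matrix (Fin d1) (Fin d2) ℝ)
    (hM : ∀ i j, β ≤ M i j ∧ M i j ≤ α) (hMhat : ∀ i j, β ≤ Mhat i j ∧ Mhat i j ≤ α) :
    (1 - Real.exp (-((α - β) ^ 2 / (8 * β)))) / (4 * α * ((α - β) ^ 2 / (8 * β)))
        * (frobSq (M - Mhat) / ((d1 : ℝ) * d2)) ≤
      hellingerSq M Mhat := by
  set c := (1 - exp (-((α - β) ^ 2 / (8 * β)))) / (4 * α * ((α - β) ^ 2 / (8 * β)))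
  unfold frobSq hellingerSq
  calc c * ((∑ i, ∑ j, (M - Mhat) i j ^ 2) / ((d1 : ℝ) * d2))
      = 1 / ((d1 : ℝ) * d2) * ∑ i, ∑ j, c * (M i j - Mhat i j) ^ 2 := by
        simp only [Matrix.sub_apply, ← Finset.mul_sum]
        ring
    _ ≤ _ := by
        gcongr with i _ j _
        exact poisson_hellinger_term_lower_bound hβ (hM i j) (hMhat i j)

/-- Lemma 3: for matrices with entries in `[β, α]`, with `T = (α−β)²/(8β)`,
`d_H²(M, M̂) ≥ ((1 − e^{−T})/(4αT)) ‖M − M̂‖_F²/(d1 d2)`. -/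
theorem hellinger_lower_bound_frobenius (d1 d2 : ℕ) (α β : ℝ) (hβ : 0 < β) (hβα : β ≤ α)
    (M Mhat : Matrix (Fin d1) (Fin d2) ℝ)
    (hM : ∀ i j, β ≤ M i j ∧ M i j ≤ α) (hMhat : ∀ i j, β ≤ Mhat i j ∧ Mhat i j ≤ α) :
    (1 - Real.exp (-((α - β) ^ 2 / (8 * β)))) / (4 * α * ((α - β) ^ 2 / (8 * β)))
        * (frobSq (M - Mhat) / ((d1 : ℝ) * d2)) ≤
      hellingerSq M Mhat :=
  hellinger_lower_bound_frobenius_general d1 d2 α β hβ M Mhat hM hMhat
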